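/- Let N ≥ 1, let δ_{−1}, δ_0, …, δ_{N+1} be real parameters, and let U_N(x) = Σ_{i=−1}^{N+1} δ_i·CTB_i(x). Then U_N is twice differentiable and for every m with 0 ≤ m ≤ N, U_N''(x_m) = γ₁·δ_{m−1} + γ₂·δ_m + γ₁·δ_{m+1}, where γ₁ = 3·(1 + 3·cos(h))·csc²(h/2) / (16·(2·cos(h/2) + cos(3h/2))) and γ₂ = −3·cot²(h/2)/(2 + 4·cos(h)). -/

import Mathlib

/-- The knot `x_j = a + j·h` of a uniform partition. -/
noncomputable def knot (h a : ℝ) (j : ℤ) : ℝ := a + (j : ℝ) * h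

/-- The cubic trigonometric B-spline `CTB_i` over the uniform knots `x_j = a + j·h`,
built from `ω_j(x) = sin((x − x_j)/2)`, `φ_j(x) = sin((x_j − x)/2)` and
`θ = sin(h/2)·sin(h)·sin(3h/2)`. -/
noncomputable def CTB (h a : ℝ) (i : ℤ) (x : ℝ) : ℝ :=
  let ω : ℤ → ℝ := fun j => Real.sin ((x - knot h a j) / 2)
  let φ : ℤ → ℝ := fun j => Real.sin ((knot h a j - x) / 2)
  let θ : ℝ := Real.sin (h / 2) * Real.sin h * Real.sin (3 * h / 2)
  if knot h a (i - 2) ≤ x ∧ x ≤ knot h a (i - 1) then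
    (ω (i - 2)) ^ 3 / θ
  else if knot h a (i - 1) ≤ x ∧ x ≤ knot h a i then
    (ω (i - 2) * (ω (i - 2) * φ i + φ (i + 1) * ω (i - 1)) + φ (i + 2) * (ω (i - 1)) ^ 2) / θ
  else if knot h a i ≤ x ∧ x ≤ knot h a (i + 1) then
    (ω (i - 2) * (φ (i + 1)) ^ 2 + φ (i + 2) * (ω (i - 1) * φ (i + 1) + φ (i + 2) * ω i)) / θ
  else if knot h a (i + 1) ≤ x ∧ x ≤ knot h a (i + 2) then
    (φ (i + 2)) ^ 3 / θ
  else 0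

/-!
Let `g(t) = sin³(t/2)` for `t > 0` and `g(t) = 0` otherwise, and let `Δ_h = trigDiff h` be the
five-point difference operator annihilating `sin³(t/2)`. Then `CTB_i(x) = (Δ_h g)(x - x_{i-2}) / θ`:
on each knot interval this is a trigonometric identity, and beyond `x_{i+2}` no term is truncated,
so they cancel. As `sin³(t/2)` vanishes to third order at `0`, `g` is twice differentiable, its
derivatives being the truncated derivatives of `sin³(t/2)`, and differentiation commutes with `Δ_h`.
So `U_N'' = Σ δ_i (Δ_h g'')(x - x_{i-2}) / θ`. At the knot `x_m` the terms with `i ≥ m + 2` vanish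
by truncation and those with `i ≤ m - 2` because `Δ_h` also annihilates the second derivative of
`sin³(t/2)`; the remaining three are `γ₁, γ₂, γ₁`.
-/

open Real Set

namespace CubicTrigBSpline

theorem indicator_Ioi_of_nonneg {E : Type*} [Zero E] {f : ℝ → E} (hf0 : f 0 = 0) {t : ℝ}
    (ht : 0 ≤ t) : (Ioi 0).indicator f t = f t := by
  rcases ht.eq_or_lt with rfl | ht
  · simp [hf0]
  · exact indicator_of_mem ht f

theorem indicator_Ioi_of_nonpos {E : Type*} [Zero E] (f : ℝ → E) {t : ℝ} (ht : t ≤ 0) :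
    (Ioi 0).indicator f t = 0 :=
  indicator_of_notMem (not_lt.2 ht) f

theorem hasDerivAt_indicator_Ioi {E : Type*} [NormedAddCommGroup E] [NormedSpace ℝ E]
    {f f' : ℝ → E} (hf : ∀ t, HasDerivAt f (f' t) t) (hf0 : f 0 = 0) (hf'0 : f' 0 = 0)
    (t : ℝ) : HasDerivAt ((Ioi 0).indicator f) ((Ioi 0).indicator f' t) t := by
  rcases lt_trichotomy t 0 with ht | rfl | ht
  · rw [indicator_Ioi_of_nonpos f' ht.le]
    refine (hasDerivAt_const t 0).congr_of_eventuallyEq ?_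
    filter_upwards [Iio_mem_nhds ht] with s hs using indicator_Ioi_of_nonpos f hs.le
  · rw [indicator_Ioi_of_nonpos f' le_rfl]
    have hleft : HasDerivWithinAt ((Ioi 0).indicator f) 0 (Iic 0) 0 :=
      (hasDerivWithinAt_const 0 _ 0).congr (fun s hs => indicator_Ioi_of_nonpos f hs)
        (indicator_Ioi_of_nonpos f le_rfl)
    have hright : HasDerivWithinAt ((Ioi 0).indicator f) 0 (Ici 0) 0 :=
      hf'0 ▸ (hf 0).hasDerivWithinAt.congr (fun s hs => indicator_Ioi_of_nonneg hf0 hs)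
        (indicator_Ioi_of_nonneg hf0 le_rfl)
    simpa using hleft.union hright
  · rw [indicator_of_mem (mem_Ioi.2 ht)]
    refine (hf t).congr_of_eventuallyEq ?_
    filter_upwards [Ioi_mem_nhds ht] with s hs using indicator_of_mem hs f

noncomputable def sinHalfCube (t : ℝ) : ℝ := sin (t / 2) ^ 3

noncomputable def sinHalfCube' (t : ℝ) : ℝ := 3 / 2 * sin (t / 2) ^ 2 * cos (t / 2)

noncomputable def sinHalfCube'' (t : ℝ) : ℝ :=
  3 / 2 * sin (t / 2) * cos (t / 2) ^ 2 - 3 / 4 * sin (t / 2) ^ 3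

theorem sinHalfCube_zero : sinHalfCube 0 = 0 := by simp [sinHalfCube]

theorem sinHalfCube'_zero : sinHalfCube' 0 = 0 := by simp [sinHalfCube']

theorem sinHalfCube''_zero : sinHalfCube'' 0 = 0 := by simp [sinHalfCube'']

theorem hasDerivAt_sinHalfCube (t : ℝ) : HasDerivAt sinHalfCube (sinHalfCube' t) t :=
  ((((hasDerivAt_id' t).div_const 2).sin).fun_pow 3).congr_deriv (by
    simp only [sinHalfCube']
    ring)

theorem hasDerivAt_sinHalfCube' (t : ℝ) : HasDerivAt sinHalfCube' (sinHalfCube'' t) t := by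
  have hhalf := (hasDerivAt_id' t).div_const 2
  exact (((hhalf.sin.fun_pow 2).const_mul (3 / 2)).fun_mul hhalf.cos).congr_deriv (by
    simp only [sinHalfCube'']
    ring)

theorem hasDerivAt_indicator_sinHalfCube (t : ℝ) :
    HasDerivAt ((Ioi 0).indicator sinHalfCube) ((Ioi 0).indicator sinHalfCube' t) t :=
  hasDerivAt_indicator_Ioi hasDerivAt_sinHalfCube sinHalfCube_zero sinHalfCube'_zero t

theorem hasDerivAt_indicator_sinHalfCube' (t : ℝ) :
    HasDerivAt ((Ioi 0).indicator sinHalfCube') ((Ioi 0).indicator sinHalfCube'' t) t :=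
  hasDerivAt_indicator_Ioi hasDerivAt_sinHalfCube' sinHalfCube'_zero sinHalfCube''_zero t

/-- The five-point difference operator with characteristic polynomial
`(z² - 2 cos(h/2) z + 1) (z² - 2 cos(3h/2) z + 1)`, whose roots are `e^{± i h/2}` and
`e^{± 3 i h/2}`; it therefore annihilates `sin (t/2)` and `sin (3t/2)`, hence also
`sin (t/2)³ = (3 sin (t/2) - sin (3t/2)) / 4`. -/
noncomputable def trigDiff (h : ℝ) (F : ℝ → ℝ) (p : ℝ) : ℝ :=
  F p - 2 * (cos (h / 2) + cos (3 * h / 2)) * (F (p - h) + F (p - 3 * h))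
    + 2 * (1 + cos h + cos (2 * h)) * F (p - 2 * h) + F (p - 4 * h)

theorem hasDerivAt_trigDiff {F F' : ℝ → ℝ} (hF : ∀ t, HasDerivAt F (F' t) t) (h p : ℝ) :
    HasDerivAt (trigDiff h F) (trigDiff h F' p) p := by
  have hshift (c : ℝ) : HasDerivAt (fun q => F (q - c)) (F' (p - c)) p :=
    HasDerivAt.comp_sub_const p c (hF (p - c))
  exact ((((hF p).sub (((hshift h).add (hshift (3 * h))).const_mul _)).add
    ((hshift (2 * h)).const_mul _)).add (hshift (4 * h)))

theorem trigDiff_eq_zero_of_hasDerivAt {F F' : ℝ → ℝ} (hF : ∀ t, HasDerivAt F (F' t) t)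
    {h : ℝ} (h0 : ∀ p, trigDiff h F p = 0) (p : ℝ) : trigDiff h F' p = 0 := by
  have hconst : trigDiff h F = fun _ => 0 := funext h0
  exact (hasDerivAt_trigDiff hF h p).unique (hconst ▸ hasDerivAt_const p 0)

theorem sin_cube_annihilation (P v : ℝ) :
    sin P ^ 3 - 2 * (cos v + cos (3 * v)) * (sin (P - v) ^ 3 + sin (P - 3 * v) ^ 3)
      + 2 * (1 + cos (2 * v) + cos (4 * v)) * sin (P - 2 * v) ^ 3 + sin (P - 4 * v) ^ 3 = 0 := by
  rw [show 2 * v = v + v by ring, show 3 * v = v + v + v by ring,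
    show 4 * v = v + v + v + v by ring]
  simp only [sin_add, cos_add, sin_sub]
  grind [sin_sq_add_cos_sq P, sin_sq_add_cos_sq v]

theorem trigDiff_sinHalfCube (h p : ℝ) : trigDiff h sinHalfCube p = 0 := by
  unfold trigDiff sinHalfCube
  linear_combination (norm := ring_nf) sin_cube_annihilation (p / 2) (h / 2)

theorem trigDiff_sinHalfCube'' (h p : ℝ) : trigDiff h sinHalfCube'' p = 0 :=
  trigDiff_eq_zero_of_hasDerivAt hasDerivAt_sinHalfCube'
    (trigDiff_eq_zero_of_hasDerivAt hasDerivAt_sinHalfCube (trigDiff_sinHalfCube h)) p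

theorem trigDiff_indicator_of_nonpos (f : ℝ → ℝ) {h p : ℝ} (hh : 0 ≤ h) (hp : p ≤ 0) :
    trigDiff h ((Ioi 0).indicator f) p = 0 := by
  simp (disch := grind) only [trigDiff, indicator_Ioi_of_nonpos]
  ring

theorem trigDiff_indicator_of_le {f : ℝ → ℝ} (hf0 : f 0 = 0) {h p : ℝ} (hh : 0 ≤ h)
    (hp : 4 * h ≤ p) : trigDiff h ((Ioi 0).indicator f) p = trigDiff h f p := by
  simp (disch := grind) only [trigDiff, indicator_Ioi_of_nonneg hf0]

noncomputable def bspline (h a : ℝ) (F : ℝ → ℝ) (i : ℤ) (x : ℝ) : ℝ :=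
  trigDiff h F (x - knot h a (i - 2)) / (sin (h / 2) * sin h * sin (3 * h / 2))

theorem hasDerivAt_bspline {F F' : ℝ → ℝ} (hF : ∀ t, HasDerivAt F (F' t) t) (h a : ℝ) (i : ℤ)
    (x : ℝ) : HasDerivAt (bspline h a F i) (bspline h a F' i x) x :=
  ((hasDerivAt_trigDiff hF h _).comp_sub_const x _).div_const _

theorem ctb_piece₂_eq (P v : ℝ) :
    sin P * (sin P * sin (2 * v - P) + sin (3 * v - P) * sin (P - v))
      + sin (4 * v - P) * sin (P - v) ^ 2
      = sin P ^ 3 - 2 * (cos v + cos (3 * v)) * sin (P - v) ^ 3 := by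
  rw [show 2 * v = v + v by ring, show 3 * v = v + v + v by ring,
    show 4 * v = v + v + v + v by ring]
  simp only [sin_add, cos_add, sin_sub]
  grind [sin_sq_add_cos_sq P, sin_sq_add_cos_sq v]

theorem ctb_piece₃_eq (P v : ℝ) :
    sin P * sin (3 * v - P) ^ 2
      + sin (4 * v - P) * (sin (P - v) * sin (3 * v - P) + sin (4 * v - P) * sin (P - 2 * v))
      = sin P ^ 3 - 2 * (cos v + cos (3 * v)) * sin (P - v) ^ 3
        + 2 * (1 + cos (2 * v) + cos (4 * v)) * sin (P - 2 * v) ^ 3 := by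
  rw [show 2 * v = v + v by ring, show 3 * v = v + v + v by ring,
    show 4 * v = v + v + v + v by ring]
  simp only [sin_add, cos_add, sin_sub]
  grind [sin_sq_add_cos_sq P, sin_sq_add_cos_sq v]

theorem ctb_piece₄_eq (P v : ℝ) :
    sin (4 * v - P) ^ 3
      = sin P ^ 3 - 2 * (cos v + cos (3 * v)) * (sin (P - v) ^ 3 + sin (P - 3 * v) ^ 3)
        + 2 * (1 + cos (2 * v) + cos (4 * v)) * sin (P - 2 * v) ^ 3 := by
  rw [← neg_sub, sin_neg]
  linear_combination -sin_cube_annihilation P v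

theorem CTB_eq_bspline {h : ℝ} (hh : 0 < h) (a : ℝ) (i : ℤ) (x : ℝ) :
    CTB h a i x = bspline h a ((Ioi 0).indicator sinHalfCube) i x := by
  have k₁ : knot h a (i - 1) = knot h a (i - 2) + h := by simp only [knot]; push_cast; ring
  have k₂ : knot h a i = knot h a (i - 2) + 2 * h := by simp only [knot]; push_cast; ring
  have k₃ : knot h a (i + 1) = knot h a (i - 2) + 3 * h := by simp only [knot]; push_cast; ring
  have k₄ : knot h a (i + 2) = knot h a (i - 2) + 4 * h := by simp only [knot]; push_cast; ring
  simp only [CTB, bspline, k₁, k₂, k₃, k₄]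
  generalize knot h a (i - 2) = c
  obtain ⟨P, rfl⟩ : ∃ P, x = c + 2 * P := ⟨(x - c) / 2, by ring⟩
  split_ifs with h₁ h₂ h₃ h₄
  · simp (disch := grind) only [trigDiff, indicator_Ioi_of_nonneg sinHalfCube_zero,
      indicator_Ioi_of_nonpos, sinHalfCube]
    ring_nf
  · simp (disch := grind) only [trigDiff, indicator_Ioi_of_nonneg sinHalfCube_zero,
      indicator_Ioi_of_nonpos, sinHalfCube]
    linear_combination (norm := ring_nf)
      ctb_piece₂_eq P (h / 2) / (sin (h / 2) * sin h * sin (3 * h / 2))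
  · simp (disch := grind) only [trigDiff, indicator_Ioi_of_nonneg sinHalfCube_zero,
      indicator_Ioi_of_nonpos, sinHalfCube]
    linear_combination (norm := ring_nf)
      ctb_piece₃_eq P (h / 2) / (sin (h / 2) * sin h * sin (3 * h / 2))
  · simp (disch := grind) only [trigDiff, indicator_Ioi_of_nonneg sinHalfCube_zero,
      indicator_Ioi_of_nonpos, sinHalfCube]
    linear_combination (norm := ring_nf)
      ctb_piece₄_eq P (h / 2) / (sin (h / 2) * sin h * sin (3 * h / 2))
  · have hout : c + 2 * P < c ∨ c + 4 * h < c + 2 * P := by grind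
    rcases hout with hlt | hgt
    · rw [trigDiff_indicator_of_nonpos _ hh.le (by linarith), zero_div]
    · rw [trigDiff_indicator_of_le sinHalfCube_zero hh.le (by linarith), trigDiff_sinHalfCube,
        zero_div]

noncomputable def nodalCoeff₁ (h : ℝ) : ℝ :=
  3 * (1 + 3 * cos h) * ((sin (h / 2))⁻¹) ^ 2 / (16 * (2 * cos (h / 2) + cos (3 * h / 2)))

noncomputable def nodalCoeff₂ (h : ℝ) : ℝ :=
  -3 * (cos (h / 2) / sin (h / 2)) ^ 2 / (2 + 4 * cos h)

theorem sinHalfCube''_nodal_values {h : ℝ} (hh : 0 < h) (hh' : h < 2 * π / 3) :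
    sinHalfCube'' h / (sin (h / 2) * sin h * sin (3 * h / 2)) = nodalCoeff₁ h ∧
    (sinHalfCube'' (2 * h) - 2 * (cos (h / 2) + cos (3 * h / 2)) * sinHalfCube'' h)
      / (sin (h / 2) * sin h * sin (3 * h / 2)) = nodalCoeff₂ h ∧
    (sinHalfCube'' (3 * h) - 2 * (cos (h / 2) + cos (3 * h / 2)) * sinHalfCube'' (2 * h)
      + 2 * (1 + cos h + cos (2 * h)) * sinHalfCube'' h)
      / (sin (h / 2) * sin h * sin (3 * h / 2)) = nodalCoeff₁ h := by
  have hπ := pi_gt_three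
  have hs : 0 < sin (h / 2) := sin_pos_of_pos_of_lt_pi (by linarith) (by linarith)
  have hc : 1 / 2 < cos (h / 2) := by
    rw [← cos_pi_div_three]
    exact cos_lt_cos_of_nonneg_of_le_pi (by linarith) (by linarith) (by linarith)
  have e₁ : sin h = 2 * sin (h / 2) * cos (h / 2) := by rw [← sin_two_mul]; ring_nf
  have e₂ : cos h = 2 * cos (h / 2) ^ 2 - 1 := by rw [← cos_two_mul]; ring_nf
  have e₃ : sin (3 * h / 2) = 3 * sin (h / 2) - 4 * sin (h / 2) ^ 3 := by
    rw [← sin_three_mul]; ring_nf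
  have e₄ : cos (3 * h / 2) = 4 * cos (h / 2) ^ 3 - 3 * cos (h / 2) := by
    rw [← cos_three_mul]; ring_nf
  have hpyth := sin_sq_add_cos_sq (h / 2)
  have h4c : 0 < 4 * cos (h / 2) ^ 2 - 1 := by nlinarith
  have d₁ : 3 * sin (h / 2) - 4 * sin (h / 2) ^ 3 ≠ 0 := by nlinarith
  have d₂ : 2 * cos (h / 2) + (4 * cos (h / 2) ^ 3 - 3 * cos (h / 2)) ≠ 0 := by nlinarith
  have d₃ : 2 + 4 * (2 * cos (h / 2) ^ 2 - 1) ≠ 0 := by nlinarith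
  simp only [sinHalfCube'', nodalCoeff₁, nodalCoeff₂, show 2 * h / 2 = h by ring]
  rw [cos_two_mul h, e₁, e₂, e₃, e₄]
  refine ⟨?_, ?_, ?_⟩ <;> field_simp <;> grind

theorem bspline_indicator_sinHalfCube''_knot {h : ℝ} (hh : 0 < h) (hh' : h < 2 * π / 3)
    (a : ℝ) (i m : ℤ) :
    bspline h a ((Ioi 0).indicator sinHalfCube'') i (knot h a m) =
      (if i = m - 1 then nodalCoeff₁ h else 0) + (if i = m then nodalCoeff₂ h else 0)
        + (if i = m + 1 then nodalCoeff₁ h else 0) := by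
  obtain ⟨v₁, v₂, v₃⟩ := sinHalfCube''_nodal_values hh hh'
  have hdiff : knot h a m - knot h a (i - 2) = ((m - i + 2 : ℤ) : ℝ) * h := by
    simp only [knot]; push_cast; ring
  rw [bspline, hdiff]
  obtain hn | hn | hn | hn | hn : m - i + 2 ≤ 0 ∨ m - i + 2 = 1 ∨ m - i + 2 = 2 ∨
      m - i + 2 = 3 ∨ 4 ≤ m - i + 2 := by omega
  · rw [trigDiff_indicator_of_nonpos _ hh.le
      (mul_nonpos_of_nonpos_of_nonneg (by exact_mod_cast hn) hh.le)]
    simp [show i ≠ m - 1 by omega, show i ≠ m by omega, show i ≠ m + 1 by omega]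
  · rw [hn, if_neg (by omega), if_neg (by omega), if_pos (by omega)]
    simp (disch := grind) only [trigDiff, Int.cast_one, one_mul,
      indicator_Ioi_of_nonneg sinHalfCube''_zero, indicator_Ioi_of_nonpos, sub_self,
      sinHalfCube''_zero]
    linear_combination (norm := ring_nf) v₁
  · rw [hn, if_neg (by omega), if_pos (by omega), if_neg (by omega)]
    simp (disch := grind) only [trigDiff, Int.cast_ofNat,
      indicator_Ioi_of_nonneg sinHalfCube''_zero, indicator_Ioi_of_nonpos, sub_self,
      sinHalfCube''_zero]
    linear_combination (norm := ring_nf) v₂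
  · rw [hn, if_pos (by omega), if_neg (by omega), if_neg (by omega)]
    simp (disch := grind) only [trigDiff, Int.cast_ofNat,
      indicator_Ioi_of_nonneg sinHalfCube''_zero, indicator_Ioi_of_nonpos, sub_self,
      sinHalfCube''_zero]
    linear_combination (norm := ring_nf) v₃
  · rw [trigDiff_indicator_of_le sinHalfCube''_zero hh.le
      (mul_le_mul_of_nonneg_right (by exact_mod_cast hn) hh.le), trigDiff_sinHalfCube'']
    simp [show i ≠ m - 1 by omega, show i ≠ m by omega, show i ≠ m + 1 by omega]

theorem hasDerivAt_sum_bspline {F F' : ℝ → ℝ} (hF : ∀ t, HasDerivAt F (F' t) t) (h a : ℝ)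
    (s : Finset ℤ) (δ : ℤ → ℝ) (x : ℝ) :
    HasDerivAt (fun y => ∑ i ∈ s, δ i * bspline h a F i y)
      (∑ i ∈ s, δ i * bspline h a F' i x) x :=
  HasDerivAt.fun_sum fun i _ => (hasDerivAt_bspline hF h a i x).const_mul (δ i)

end CubicTrigBSpline

open CubicTrigBSpline in
theorem spline_expansion_nodal_second_deriv_general (h a : ℝ) (hh : 0 < h) (hh' : h < 2 * Real.pi / 3)
    (N : ℕ) (δ : ℤ → ℝ) (U : ℝ → ℝ)
    (hU : U = fun x => ∑ i ∈ Finset.Icc (-1 : ℤ) ((N : ℤ) + 1), δ i * CTB h a i x) :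
    Differentiable ℝ U ∧ Differentiable ℝ (deriv U) ∧
    ∀ m : ℤ, 0 ≤ m → m ≤ (N : ℤ) →
      deriv (deriv U) (knot h a m) =
        (3 * (1 + 3 * Real.cos h) * ((Real.sin (h / 2))⁻¹) ^ 2 /
          (16 * (2 * Real.cos (h / 2) + Real.cos (3 * h / 2)))) * δ (m - 1) +
        (-3 * (Real.cos (h / 2) / Real.sin (h / 2)) ^ 2 / (2 + 4 * Real.cos h)) * δ m +
        (3 * (1 + 3 * Real.cos h) * ((Real.sin (h / 2))⁻¹) ^ 2 /
          (16 * (2 * Real.cos (h / 2) + Real.cos (3 * h / 2)))) * δ (m + 1) := by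
  have hU_bspline : U = fun x => ∑ i ∈ Finset.Icc (-1 : ℤ) ((N : ℤ) + 1),
      δ i * bspline h a ((Ioi 0).indicator sinHalfCube) i x := by
    simp only [hU, CTB_eq_bspline hh]
  have hU₁ (x : ℝ) := hU_bspline ▸
    hasDerivAt_sum_bspline hasDerivAt_indicator_sinHalfCube h a _ δ x
  have hU₂ (x : ℝ) : HasDerivAt (deriv U) _ x := (funext fun y => (hU₁ y).deriv) ▸
    hasDerivAt_sum_bspline hasDerivAt_indicator_sinHalfCube' h a _ δ x
  refine ⟨fun x => (hU₁ x).differentiableAt, fun x => (hU₂ x).differentiableAt,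
    fun m hm₀ hmN => ?_⟩
  rw [(hU₂ _).deriv]
  simp only [bspline_indicator_sinHalfCube''_knot hh hh', mul_add, mul_ite, mul_zero,
    Finset.sum_add_distrib, Finset.sum_ite_eq', Finset.mem_Icc]
  rw [if_pos (by omega), if_pos (by omega), if_pos (by omega), nodalCoeff₁, nodalCoeff₂]
  ring

/-- The spline expansion `U_N = Σ_{i=−1}^{N+1} δ_i·CTB_i` is twice differentiable and
`U_N''(x_m) = γ₁δ_{m−1} + γ₂δ_m + γ₁δ_{m+1}` with
`γ₁ = 3(1+3cos h)csc²(h/2)/(16(2cos(h/2)+cos(3h/2)))`,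
`γ₂ = −3cot²(h/2)/(2+4cos h)`, for `0 ≤ m ≤ N`. -/
theorem spline_expansion_nodal_second_deriv (h a : ℝ) (hh : 0 < h) (hh' : h < 2 * Real.pi / 3)
    (N : ℕ) (hN : 1 ≤ N) (δ : ℤ → ℝ) (U : ℝ → ℝ)
    (hU : U = fun x => ∑ i ∈ Finset.Icc (-1 : ℤ) ((N : ℤ) + 1), δ i * CTB h a i x) :
    Differentiable ℝ U ∧ Differentiable ℝ (deriv U) ∧
    ∀ m : ℤ, 0 ≤ m → m ≤ (N : ℤ) →
      deriv (deriv U) (knot h a m) =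
        (3 * (1 + 3 * Real.cos h) * ((Real.sin (h / 2))⁻¹) ^ 2 /
          (16 * (2 * Real.cos (h / 2) + Real.cos (3 * h / 2)))) * δ (m - 1) +
        (-3 * (Real.cos (h / 2) / Real.sin (h / 2)) ^ 2 / (2 + 4 * Real.cos h)) * δ m +
        (3 * (1 + 3 * Real.cos h) * ((Real.sin (h / 2))⁻¹) ^ 2 /
          (16 * (2 * Real.cos (h / 2) + Real.cos (3 * h / 2)))) * δ (m + 1) :=
  spline_expansion_nodal_second_deriv_general h a hh hh' N δ U hU
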